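/- The set of conjugacy classes of triples (A, a, h) ∈ SU(2)³ with tr(a) = tr(h) = 0 and ha = -ah (no condition on A), under simultaneous conjugation, is homeomorphic to S³ = {(z₁,z₂) ∈ ℂ² : |z₁|² + |z₂|² = 1}: every such triple has a unique representative with a = iσ_z, h = iσ_x, and A the matrix with first column (z₁, z₂) and second column (-z̄₂, z̄₁). -/

import Mathlib

open Matrix

noncomputable section

def σx : Matrix (Fin 2) (Fin 2) ℂ := !![0, 1; 1, 0]
def σz : Matrix (Fin 2) (Fin 2) ℂ := !![1, 0; 0, -1]

abbrev SU2 := Matrix.specialUnitaryGroup (Fin 2) ℂ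

/-- Triples `(A, a, h) ∈ SU(2)³` with `tr a = tr h = 0` and `ha = -ah`. -/
def TripleSp : Type :=
  {t : SU2 × SU2 × SU2 //
    Matrix.trace (t.2.1 : Matrix (Fin 2) (Fin 2) ℂ) = 0 ∧
    Matrix.trace (t.2.2 : Matrix (Fin 2) (Fin 2) ℂ) = 0 ∧
    (t.2.2 : Matrix (Fin 2) (Fin 2) ℂ) * t.2.1 =
      -((t.2.1 : Matrix (Fin 2) (Fin 2) ℂ) * t.2.2)}

/-- Simultaneous conjugation relation on such triples. -/
def conjRel3 (t t' : TripleSp) : Prop :=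
  ∃ g : SU2,
    (g : Matrix (Fin 2) (Fin 2) ℂ) * t.1.1 * (g : Matrix (Fin 2) (Fin 2) ℂ)⁻¹ =
      (t'.1.1 : Matrix (Fin 2) (Fin 2) ℂ) ∧
    (g : Matrix (Fin 2) (Fin 2) ℂ) * t.1.2.1 * (g : Matrix (Fin 2) (Fin 2) ℂ)⁻¹ =
      (t'.1.2.1 : Matrix (Fin 2) (Fin 2) ℂ) ∧
    (g : Matrix (Fin 2) (Fin 2) ℂ) * t.1.2.2 * (g : Matrix (Fin 2) (Fin 2) ℂ)⁻¹ =
      (t'.1.2.2 : Matrix (Fin 2) (Fin 2) ℂ)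

instance : TopologicalSpace TripleSp := instTopologicalSpaceSubtype

/-- `S³ = {(z₁,z₂) ∈ ℂ² : |z₁|² + |z₂|² = 1}`. -/
def Sph3 : Type :=
  {z : ℂ × ℂ // ‖z.1‖ ^ 2 + ‖z.2‖ ^ 2 = 1}

instance : TopologicalSpace Sph3 := instTopologicalSpaceSubtype

/-!
A traceless `x ∈ SU(2)` satisfies `x⋆ = -x` and `x² = -1`. Hence for two of them with
`x + y ≠ 0` we have `(x + y) x = y (x + y)`, and `x + y` rescaled by a positive real lies in
SU(2): it conjugates `x` to `y`. Two such reflections bring an anticommuting pair `(a, h)` to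
`(iσz, iσx)`, after which `A` is an arbitrary `!![z₁, -z̄₂; z₂, z̄₁]` in SU(2). The traces of
`A, Aa, Ah, Aah` are conjugation invariants that recover `(z₁, z₂)` from this normal form;
they give uniqueness, and a continuous inverse of `z ↦ [normal form of z]`.
-/

open Complex ComplexConjugate

local notation "M₂" => Matrix (Fin 2) (Fin 2) ℂ

namespace Matrix

variable {n R : Type*} [Fintype n] [DecidableEq n] [CommRing R]

theorem mem_specialUnitaryGroup_iff_star_eq_adjugate [StarRing R] {M : Matrix n n R} :
    M ∈ specialUnitaryGroup n R ↔ star M = adjugate M ∧ det M = 1 := by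
  rw [mem_specialUnitaryGroup_iff]
  constructor
  · rintro ⟨hU, hdet⟩
    refine ⟨?_, hdet⟩
    calc star M = star M * (M * adjugate M) := by rw [mul_adjugate, hdet, one_smul, mul_one]
      _ = adjugate M := by rw [← Matrix.mul_assoc, Unitary.star_mul_self_of_mem hU, Matrix.one_mul]
  · rintro ⟨hstar, hdet⟩
    refine ⟨⟨?_, ?_⟩, hdet⟩
    · rw [hstar, adjugate_mul, hdet, one_smul]
    · rw [hstar, mul_adjugate, hdet, one_smul]

theorem conj_mul_conj {g : Matrix n n R} (hg : IsUnit g) (X Y : Matrix n n R) :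
    g * X * g⁻¹ * (g * Y * g⁻¹) = g * (X * Y) * g⁻¹ := by
  simp only [Matrix.mul_assoc, ← Matrix.mul_assoc g⁻¹ g,
    nonsing_inv_mul g ((isUnit_iff_isUnit_det g).1 hg), Matrix.one_mul]

theorem adjugate_eq_neg_of_trace_eq_zero {M : Matrix (Fin 2) (Fin 2) R} (h : trace M = 0) :
    adjugate M = -M := by
  have h11 : M 1 1 = -M 0 0 := by rw [trace_fin_two] at h; linear_combination h
  rw [adjugate_fin_two, eta_fin_two (-M)]
  simp only [Matrix.neg_apply, h11, neg_neg]

end Matrix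

open Matrix

namespace SU2

theorem star_eq_neg_of_trace_eq_zero {x : M₂} (hx : x ∈ SU2) (h : trace x = 0) :
    star x = -x :=
  (mem_specialUnitaryGroup_iff_star_eq_adjugate.1 hx).1.trans (adjugate_eq_neg_of_trace_eq_zero h)

theorem mul_self_eq_neg_one_of_trace_eq_zero {x : M₂} (hx : x ∈ SU2) (h : trace x = 0) :
    x * x = -1 := by
  have := mul_adjugate x
  rw [adjugate_eq_neg_of_trace_eq_zero h, (mem_specialUnitaryGroup_iff.1 hx).2, one_smul,
    Matrix.mul_neg] at this
  exact neg_eq_iff_eq_neg.1 this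

theorem mem_of_star_eq_neg {m : M₂} (hstar : star m = -m) (htr : trace m = 0)
    (hdet : det m = 1) : m ∈ SU2 :=
  mem_specialUnitaryGroup_iff_star_eq_adjugate.2
    ⟨by rw [hstar, adjugate_eq_neg_of_trace_eq_zero htr], hdet⟩

open scoped ComplexOrder in
theorem exists_real_smul_mem {m : M₂} (hstar : star m = -m) (htr : trace m = 0) (hm : m ≠ 0) :
    ∃ c : ℝ, (c : ℂ) • m ∈ SU2 := by
  have hdet : mᴴ * m = det m • 1 := by
    rw [← star_eq_conjTranspose, hstar, ← adjugate_eq_neg_of_trace_eq_zero htr, adjugate_mul]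
  have hpos : 0 < det m := by
    refine lt_of_le_of_ne ?_ fun h0 => hm (conjTranspose_mul_self_eq_zero.1 ?_)
    · simpa [hdet] using (posSemidef_conjTranspose_mul_self m).diag_nonneg (i := 0)
    · rw [hdet, ← h0, zero_smul]
  obtain ⟨d, hd_pos, hd⟩ : ∃ d : ℝ, 0 < d ∧ det m = d := by
    obtain ⟨hre, him⟩ := Complex.pos_iff.1 hpos
    exact ⟨_, hre, Complex.ext rfl (by simp [← him])⟩
  refine ⟨(√d)⁻¹, mem_of_star_eq_neg ?_ ?_ ?_⟩
  · rw [star_smul, hstar, smul_neg, Complex.star_def, Complex.conj_ofReal]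
  · rw [trace_smul, htr, smul_zero]
  · rw [det_smul, Fintype.card_fin, hd, ← ofReal_pow, ← ofReal_mul, inv_pow,
      Real.sq_sqrt hd_pos.le, inv_mul_cancel₀ hd_pos.ne', ofReal_one]

theorem coe_inv (g : SU2) : ((g⁻¹ : SU2) : M₂) = (g : M₂)⁻¹ :=
  (inv_eq_left_inv (congrArg Subtype.val (inv_mul_cancel g))).symm

theorem isUnit_coe (g : SU2) : IsUnit (g : M₂) :=
  ⟨⟨g, ↑g⁻¹, congrArg Subtype.val (mul_inv_cancel g), congrArg Subtype.val (inv_mul_cancel g)⟩,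
    rfl⟩

theorem coe_conj (g x : SU2) : ((g * x * g⁻¹ : SU2) : M₂) = g * x * (g : M₂)⁻¹ := by
  rw [← coe_inv]; rfl

theorem coe_conj_of_anticomm {k x : SU2} (h : (k : M₂) * x = -(x * k)) :
    ((k * x * k⁻¹ : SU2) : M₂) = -x := by
  rw [coe_conj, h, Matrix.neg_mul, Matrix.mul_assoc,
    mul_nonsing_inv _ ((isUnit_iff_isUnit_det _).1 (isUnit_coe k)), Matrix.mul_one]

theorem exists_conj_eq_of_add_ne_zero {x y : SU2} (hx : trace (x : M₂) = 0)
    (hy : trace (y : M₂) = 0) (hxy : (x : M₂) + y ≠ 0) :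
    ∃ (r : SU2) (c : ℂ), (r : M₂) = c • ((x : M₂) + y) ∧ r * x * r⁻¹ = y := by
  have hstar : star ((x : M₂) + y) = -(x + y) := by
    rw [star_add, star_eq_neg_of_trace_eq_zero x.2 hx, star_eq_neg_of_trace_eq_zero y.2 hy,
      neg_add]
  obtain ⟨c, hc⟩ := exists_real_smul_mem hstar (by rw [trace_add, hx, hy, add_zero]) hxy
  refine ⟨⟨_, hc⟩, c, rfl, mul_inv_eq_iff_eq_mul.2 (Subtype.ext ?_)⟩
  change (c : ℂ) • ((x : M₂) + y) * x = y * ((c : ℂ) • ((x : M₂) + y))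
  rw [Matrix.smul_mul, Matrix.mul_smul, Matrix.add_mul, Matrix.mul_add,
    mul_self_eq_neg_one_of_trace_eq_zero x.2 hx, mul_self_eq_neg_one_of_trace_eq_zero y.2 hy,
    add_comm]

def iσz : SU2 :=
  ⟨I • σz, mem_of_star_eq_neg (by ext i j; fin_cases i <;> fin_cases j <;> simp [σz])
    (by simp [σz]) (by simp [σz, det_fin_two])⟩

def iσx : SU2 :=
  ⟨I • σx, mem_of_star_eq_neg (by ext i j; fin_cases i <;> fin_cases j <;> simp [σx])
    (by simp [σx]) (by simp [σx, det_fin_two])⟩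

theorem trace_iσz : trace (iσz : M₂) = 0 := by simp [iσz, σz]

theorem trace_iσx : trace (iσx : M₂) = 0 := by simp [iσx, σx]

theorem iσx_mul_iσz : (iσx : M₂) * iσz = -(iσz * iσx) := by
  ext i j; fin_cases i <;> fin_cases j <;> simp [iσx, iσz, σx, σz, Matrix.mul_apply]

theorem exists_conj_eq_iσz {a h : SU2} (ha : trace (a : M₂) = 0)
    (anti : (h : M₂) * a = -(a * h)) : ∃ g : SU2, g * a * g⁻¹ = iσz := by
  by_cases hB : (a : M₂) + iσz = 0
  · exact ⟨h, Subtype.ext ((coe_conj_of_anticomm anti).trans (neg_eq_of_add_eq_zero_right hB))⟩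
  · obtain ⟨r, -, -, hr⟩ := exists_conj_eq_of_add_ne_zero ha trace_iσz hB
    exact ⟨r, hr⟩

theorem exists_conj_eq_iσx {h : SU2} (hh : trace (h : M₂) = 0)
    (anti : (h : M₂) * iσz = -(iσz * h)) :
    ∃ g : SU2, g * iσz * g⁻¹ = iσz ∧ g * h * g⁻¹ = iσx := by
  have anti' : (iσz : M₂) * h = -(h * iσz) := by rw [anti, neg_neg]
  by_cases hC : (h : M₂) + iσx = 0
  · exact ⟨iσz, by group,
      Subtype.ext ((coe_conj_of_anticomm anti').trans (neg_eq_of_add_eq_zero_right hC))⟩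
  · obtain ⟨r, c, hrc, hr⟩ := exists_conj_eq_of_add_ne_zero hh trace_iσx hC
    have hrB : (r : M₂) * iσz = -(iσz * r) := by
      rw [hrc, Matrix.smul_mul, Matrix.mul_smul, Matrix.add_mul, Matrix.mul_add, anti,
        iσx_mul_iσz, ← neg_add, smul_neg]
    -- `r` carries `h` to `iσx` but `iσz` to `-iσz`; conjugating by `iσx` repairs the latter.
    refine ⟨iσx * r, ?_, ?_⟩
    · rw [show (iσx * r) * iσz * (iσx * r)⁻¹ = iσx * (r * iσz * r⁻¹) * iσx⁻¹ by group]
      apply Subtype.ext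
      rw [coe_conj iσx, coe_conj_of_anticomm hrB, Matrix.mul_neg, Matrix.neg_mul, ← coe_conj,
        coe_conj_of_anticomm iσx_mul_iσz, neg_neg]
    · calc (iσx * r) * h * (iσx * r)⁻¹ = iσx * (r * h * r⁻¹) * iσx⁻¹ := by group
        _ = iσx := by rw [hr]; group

theorem exists_conj_eq_iσz_iσx {a h : SU2} (ha : trace (a : M₂) = 0)
    (hh : trace (h : M₂) = 0) (anti : (h : M₂) * a = -(a * h)) :
    ∃ g : SU2, g * a * g⁻¹ = iσz ∧ g * h * g⁻¹ = iσx := by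
  obtain ⟨g₁, hg₁⟩ := exists_conj_eq_iσz ha anti
  have anti₁ : ((g₁ * h * g₁⁻¹ : SU2) : M₂) * iσz = -(iσz * (g₁ * h * g₁⁻¹ : SU2)) := by
    rw [← hg₁, coe_conj, coe_conj, conj_mul_conj (isUnit_coe g₁), conj_mul_conj (isUnit_coe g₁),
      anti, Matrix.mul_neg, Matrix.neg_mul]
  obtain ⟨g₂, hg₂z, hg₂x⟩ := exists_conj_eq_iσx
    (by rw [coe_conj, trace_conj (isUnit_coe g₁), hh]) anti₁
  refine ⟨g₂ * g₁, ?_, ?_⟩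
  · rw [← hg₂z, ← hg₁]; group
  · rw [← hg₂x]; group

theorem det_fin_two_conj (z₁ z₂ : ℂ) :
    det !![z₁, -conj z₂; z₂, conj z₁] = ((‖z₁‖ ^ 2 + ‖z₂‖ ^ 2 : ℝ) : ℂ) := by
  rw [det_fin_two_of]
  push_cast
  rw [← mul_conj', ← conj_mul']
  ring

theorem mem_iff_exists {M : M₂} :
    M ∈ SU2 ↔ ∃ z₁ z₂ : ℂ, ‖z₁‖ ^ 2 + ‖z₂‖ ^ 2 = 1 ∧ M = !![z₁, -conj z₂; z₂, conj z₁] := by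
  rw [mem_specialUnitaryGroup_iff_star_eq_adjugate]
  constructor
  · rintro ⟨hstar, hdet⟩
    have h11 : M 1 1 = conj (M 0 0) := by
      simpa [adjugate_fin_two] using (congrFun₂ hstar 0 0).symm
    have h01 : M 0 1 = -conj (M 1 0) := by
      have := congrArg conj (congrFun₂ hstar 1 0)
      simpa [adjugate_fin_two] using this
    have hM : M = !![M 0 0, -conj (M 1 0); M 1 0, conj (M 0 0)] := by
      rw [← h11, ← h01]; exact eta_fin_two M
    refine ⟨_, _, ?_, hM⟩
    rw [hM, det_fin_two_conj] at hdet
    exact_mod_cast hdet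
  · rintro ⟨z₁, z₂, hz, rfl⟩
    refine ⟨?_, by rw [det_fin_two_conj, hz, ofReal_one]⟩
    ext i j
    fin_cases i <;> fin_cases j <;> simp [adjugate_fin_two]

end SU2

open SU2

theorem smul_σz : I • σz = !![I, 0; 0, -I] := by
  ext i j; fin_cases i <;> fin_cases j <;> simp [σz]

theorem smul_σx : I • σx = !![0, I; I, 0] := by
  ext i j; fin_cases i <;> fin_cases j <;> simp [σx]

/-- Writing `A = α + β a + γ h + δ ah` with real coefficients (read off by traces, as
`a² = h² = (ah)² = -1`), these are `(α + iβ, δ + iγ)`. -/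
def traceCoords (A a h : M₂) : ℂ × ℂ :=
  ((trace A - I * trace (A * a)) / 2, -(trace (A * a * h) + I * trace (A * h)) / 2)

theorem traceCoords_conj {g : M₂} (hg : IsUnit g) (A a h : M₂) :
    traceCoords (g * A * g⁻¹) (g * a * g⁻¹) (g * h * g⁻¹) = traceCoords A a h := by
  simp only [traceCoords, conj_mul_conj hg, trace_conj hg]

theorem traceCoords_normalForm (z₁ z₂ : ℂ) :
    traceCoords !![z₁, -conj z₂; z₂, conj z₁] (I • σz) (I • σx) = (z₁, z₂) := by
  simp only [traceCoords, smul_σz, smul_σx, mul_fin_two, trace_fin_two_of, Prod.mk.injEq]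
  constructor
  · linear_combination (conj z₁ - z₁) / 2 * I_sq
  · linear_combination -z₂ * I_sq

namespace TripleSp

def coords (t : TripleSp) : ℂ × ℂ :=
  traceCoords t.1.1 t.1.2.1 t.1.2.2

theorem coords_eq_of_conjRel3 {t t' : TripleSp} (h : conjRel3 t t') : t.coords = t'.coords := by
  obtain ⟨g, hA, ha, hh⟩ := h
  rw [coords, coords, ← hA, ← ha, ← hh, traceCoords_conj (isUnit_coe g)]

theorem continuous_coords : Continuous coords := by
  unfold coords traceCoords
  fun_prop

def normalForm (z : Sph3) : TripleSp :=
  ⟨(⟨!![z.1.1, -conj z.1.2; z.1.2, conj z.1.1], mem_iff_exists.2 ⟨_, _, z.2, rfl⟩⟩, iσz, iσx),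
    trace_iσz, trace_iσx, iσx_mul_iσz⟩

theorem coords_normalForm (z : Sph3) : (normalForm z).coords = z.1 :=
  traceCoords_normalForm _ _

theorem continuous_normalForm : Continuous normalForm :=
  .subtype_mk (.prodMk (.subtype_mk (by fun_prop) _) continuous_const) _

theorem exists_conjRel3_normalForm (t : TripleSp) : ∃ z : Sph3, conjRel3 t (normalForm z) := by
  obtain ⟨g, ha, hh⟩ := exists_conj_eq_iσz_iσx t.2.1 t.2.2.1 t.2.2.2
  obtain ⟨z₁, z₂, hz, hA⟩ := mem_iff_exists.1 (g * t.1.1 * g⁻¹).2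
  refine ⟨⟨(z₁, z₂), hz⟩, g, ?_, ?_, ?_⟩ <;> rw [← coe_conj]
  · exact hA
  · rw [ha]; rfl
  · rw [hh]; rfl

def toSph3 (t : TripleSp) : Sph3 :=
  ⟨t.coords, by
    obtain ⟨z, hz⟩ := exists_conjRel3_normalForm t
    rw [coords_eq_of_conjRel3 hz, coords_normalForm]
    exact z.2⟩

theorem toSph3_eq {t : TripleSp} {z : Sph3} (h : conjRel3 t (normalForm z)) : t.toSph3 = z :=
  Subtype.ext ((coords_eq_of_conjRel3 h).trans (coords_normalForm z))

end TripleSp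

open TripleSp

/-- The set of conjugacy classes of triples `(A,a,h)` with `tr a = tr h = 0`,
`ha = -ah`, is homeomorphic to `S³`: every such triple has a unique representative
with `a = iσz`, `h = iσx`, `A = !![z₁, -z̄₂; z₂, z̄₁]`. -/
theorem triple_character_variety_sphere :
    (∀ t : TripleSp, ∃! z : Sph3, ∃ t' : TripleSp, conjRel3 t t' ∧
      (t'.1.1 : Matrix (Fin 2) (Fin 2) ℂ) =
        !![z.1.1, -(starRingEnd ℂ) z.1.2; z.1.2, (starRingEnd ℂ) z.1.1] ∧
      (t'.1.2.1 : Matrix (Fin 2) (Fin 2) ℂ) = Complex.I • σz ∧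
      (t'.1.2.2 : Matrix (Fin 2) (Fin 2) ℂ) = Complex.I • σx) ∧
    Nonempty (Quot conjRel3 ≃ₜ Sph3) := by
  refine ⟨fun t => ?_, ⟨?_⟩⟩
  · obtain ⟨z, hz⟩ := exists_conjRel3_normalForm t
    refine ⟨z, ⟨normalForm z, hz, rfl, rfl, rfl⟩, ?_⟩
    rintro y ⟨t', ht', hA, ha, hh⟩
    obtain rfl : t' = normalForm y :=
      Subtype.ext (Prod.ext (Subtype.ext hA) (Prod.ext (Subtype.ext ha) (Subtype.ext hh)))
    exact (toSph3_eq ht').symm.trans (toSph3_eq hz)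
  · exact
      { toFun := Quot.lift toSph3 fun _ _ h => Subtype.ext (coords_eq_of_conjRel3 h)
        invFun := fun z => Quot.mk _ (normalForm z)
        left_inv := Quot.ind fun t => by
          obtain ⟨z, hz⟩ := exists_conjRel3_normalForm t
          show Quot.mk _ (normalForm t.toSph3) = _
          rw [toSph3_eq hz]
          exact (Quot.sound hz).symm
        right_inv := fun z => Subtype.ext (coords_normalForm z)
        continuous_toFun := continuous_quot_lift _ (continuous_coords.subtype_mk _)
        continuous_invFun := continuous_quot_mk.comp continuous_normalForm }
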